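/- Fix u, k, ω, σ > 0 and β > 0. Then λ ∫₀^∞ exp(−λα − ½k²σ²(α + β + λ^{−1})) sin(ω(α+β)) sinh((k²σ²/(2λ)) e^{−λ(α+β)}) dα tends to 0 as λ → 0⁺. -/

import Mathlib

/-!
Since `sinh x ≤ eˣ / 2`, the factor `exp(-c/λ)` (with `c = k²σ²/2`) cancels the growth of
`sinh((c/λ) e^{-λ(α+β)})`, so the integrand is dominated by `e^{-cα} / 2` uniformly in `λ > 0`.
The integral is therefore bounded as `λ → 0⁺`, and the prefactor `λ` sends the product to `0`.
-/

open MeasureTheory Real Set Filter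

/-- The paper's leading-order Stokes'-drift kernel `M(β)` for the elastic dumbbell,
with wave amplitude `u`, wavenumber `k`, frequency `ω`, noise strength `σ`,
and spring constant `l` (the paper's `λ`). -/
noncomputable def stokesKernel (u k ω σ l β : ℝ) : ℝ :=
  (1 / 2) * u ^ 2 * k *
    (Real.sin (ω * β) *
        Real.exp (-(k ^ 2 * σ ^ 2 / 2) * (β + l⁻¹ * (1 - Real.exp (-(l * β))))) -
      l * ∫ α in Ioi (0 : ℝ),
        Real.exp (-(l * α) - k ^ 2 * σ ^ 2 / 2 * (α + β + l⁻¹)) * Real.sin (ω * (α + β)) *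
          Real.sinh (k ^ 2 * σ ^ 2 / (2 * l) * Real.exp (-(l * (α + β)))))

noncomputable def weakSpringIntegrand (c ω β l α : ℝ) : ℝ :=
  exp (-(l * α) - c * (α + β + l⁻¹)) * sin (ω * (α + β)) * sinh (c / l * exp (-(l * (α + β))))

lemma Real.sinh_le_exp_div_two (x : ℝ) : sinh x ≤ exp x / 2 := by
  rw [sinh_eq]
  linarith [exp_pos (-x)]

lemma abs_weakSpringIntegrand_le {c ω β l α : ℝ} (hc : 0 ≤ c) (hβ : 0 ≤ β) (hl : 0 < l)
    (hα : 0 ≤ α) : |weakSpringIntegrand c ω β l α| ≤ exp (-c * α) / 2 := by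
  set x := c / l * exp (-(l * (α + β)))
  have hx : 0 ≤ x := by positivity
  have hx_le : x ≤ c * l⁻¹ := by
    rw [← div_eq_mul_inv]
    refine mul_le_of_le_one_right (by positivity) (exp_le_one_iff.mpr ?_)
    nlinarith
  have hexponent : -(l * α) - c * (α + β + l⁻¹) + x ≤ -c * α := by
    nlinarith [mul_nonneg hl.le hα, mul_nonneg hc hβ]
  calc |weakSpringIntegrand c ω β l α|
      = exp (-(l * α) - c * (α + β + l⁻¹)) * |sin (ω * (α + β))| * sinh x := by
        rw [weakSpringIntegrand, abs_mul, abs_mul, abs_exp, abs_of_nonneg (sinh_nonneg_iff.mpr hx)]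
    _ ≤ exp (-(l * α) - c * (α + β + l⁻¹)) * 1 * (exp x / 2) := by
        gcongr
        · exact abs_sin_le_one _
        · exact sinh_le_exp_div_two x
    _ = exp (-(l * α) - c * (α + β + l⁻¹) + x) / 2 := by rw [exp_add]; ring
    _ ≤ exp (-c * α) / 2 := by gcongr

lemma norm_integral_weakSpringIntegrand_le {c ω β l : ℝ} (hc : 0 < c) (hβ : 0 ≤ β) (hl : 0 < l) :
    ‖∫ α in Ioi 0, weakSpringIntegrand c ω β l α‖ ≤ ∫ α in Ioi 0, exp (-c * α) / 2 :=
  norm_integral_le_of_norm_le ((exp_neg_integrableOn_Ioi 0 hc).div_const 2) <|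
    (ae_restrict_mem measurableSet_Ioi).mono fun _ hα =>
      abs_weakSpringIntegrand_le hc.le hβ hl (le_of_lt hα)

theorem kernel_second_term_tendsto_zero_weak_spring (k ω σ β : ℝ)
    (hk : 0 < k) (hσ : 0 < σ) (hβ : 0 < β) :
    Filter.Tendsto
      (fun l : ℝ =>
        l * ∫ α in Ioi (0 : ℝ),
          Real.exp (-(l * α) - k ^ 2 * σ ^ 2 / 2 * (α + β + l⁻¹)) * Real.sin (ω * (α + β)) *
            Real.sinh (k ^ 2 * σ ^ 2 / (2 * l) * Real.exp (-(l * (α + β)))))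
      (nhdsWithin 0 (Ioi 0)) (nhds 0) := by
  have hc : 0 < k ^ 2 * σ ^ 2 / 2 := by positivity
  simp_rw [div_mul_eq_div_div _ (2 : ℝ)]
  refine (tendsto_id.mono_left nhdsWithin_le_nhds).zero_mul_isBoundedUnder_le
    (g := fun l => ∫ α in Ioi 0, weakSpringIntegrand (k ^ 2 * σ ^ 2 / 2) ω β l α) ?_
  exact isBoundedUnder_of_eventually_le <| eventually_mem_nhdsWithin.mono fun l hl =>
    norm_integral_weakSpringIntegrand_le hc hβ.le hl
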